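/- arXiv:math/0609689 — 3 statements merged into one kernel-verified Lean document; each statement's English description precedes it below -/
import Mathlib

section
/- For every real number a with 0 < a < 1/2, Γ(1/2)·Γ(a/2+1) / (Γ(a+1)·Γ(1/2 - a/2)) = 2^{-a} · cos(πa/2). -/
/-! Legendre's duplication formula at `s = (a + 1) / 2` turns `Γ(a/2 + 1) / Γ(a + 1)` into
`2^(-a) √π / Γ(a/2 + 1/2)`, and the reflection formula at the same `s` gives
`Γ(a/2 + 1/2) Γ(1/2 - a/2) = π / cos (π a / 2)`. Together with `Γ(1/2) = √π` the factors of `π`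
cancel. -/

open Real

namespace Real

theorem Gamma_half_add_half_mul_Gamma_half_add_one (a : ℝ) :
    Gamma (a / 2 + 1 / 2) * Gamma (a / 2 + 1) = 2 ^ (-a) * √π * Gamma (a + 1) := by
  have h := Gamma_mul_Gamma_add_half (a / 2 + 1 / 2)
  rw [show a / 2 + 1 / 2 + 1 / 2 = a / 2 + 1 by ring, show 2 * (a / 2 + 1 / 2) = a + 1 by ring,
    show 1 - (a + 1) = -a by ring] at h
  rw [h]
  ring

theorem Gamma_half_add_half_mul_Gamma_half_sub_half (a : ℝ) :
    Gamma (a / 2 + 1 / 2) * Gamma (1 / 2 - a / 2) = π / cos (π * a / 2) := by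
  have h := Gamma_mul_Gamma_one_sub (a / 2 + 1 / 2)
  rwa [show 1 - (a / 2 + 1 / 2) = 1 / 2 - a / 2 by ring,
    show π * (a / 2 + 1 / 2) = π * a / 2 + π / 2 by ring, sin_add_pi_div_two] at h

theorem Gamma_half_mul_Gamma_half_add_one_div (a : ℝ) (ha : -1 < a) :
    Gamma (1 / 2) * Gamma (a / 2 + 1) / (Gamma (a + 1) * Gamma (1 / 2 - a / 2)) =
      2 ^ (-a) * cos (π * a / 2) := by
  have hΓa : Gamma (a + 1) ≠ 0 := (Gamma_pos_of_pos (by linarith)).ne'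
  have hΓs : Gamma (a / 2 + 1 / 2) ≠ 0 := (Gamma_pos_of_pos (by linarith)).ne'
  calc Gamma (1 / 2) * Gamma (a / 2 + 1) / (Gamma (a + 1) * Gamma (1 / 2 - a / 2))
      = Gamma (a / 2 + 1 / 2) * (√π * Gamma (a / 2 + 1)) /
          (Gamma (a / 2 + 1 / 2) * (Gamma (a + 1) * Gamma (1 / 2 - a / 2))) := by
        rw [Gamma_one_half_eq, mul_div_mul_left _ _ hΓs]
    _ = 2 ^ (-a) * (√π * √π) * Gamma (a + 1) /
          (Gamma (a / 2 + 1 / 2) * Gamma (1 / 2 - a / 2) * Gamma (a + 1)) := by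
        rw [mul_left_comm _ √π, Gamma_half_add_half_mul_Gamma_half_add_one]
        ring
    _ = 2 ^ (-a) * (π / (π / cos (π * a / 2))) := by
        rw [Gamma_half_add_half_mul_Gamma_half_sub_half, mul_self_sqrt pi_pos.le,
          mul_div_mul_right _ _ hΓa, mul_div_assoc]
    -- also at odd `a`, where `cos (π * a / 2) = 0` and `Γ (1/2 - a/2)` takes the junk value `0`
    _ = 2 ^ (-a) * cos (π * a / 2) := by rw [div_div_cancel₀ pi_ne_zero]

end Real

theorem kummer_special_general (a : ℝ) (ha0 : 0 < a) :
    Real.Gamma (1 / 2) * Real.Gamma (a / 2 + 1) /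
      (Real.Gamma (a + 1) * Real.Gamma (1 / 2 - a / 2)) =
    2 ^ (-a) * Real.cos (π * a / 2) :=
  Real.Gamma_half_mul_Gamma_half_add_one_div a (by linarith)

theorem kummer_special (a : ℝ) (ha0 : 0 < a) (ha1 : a < 1 / 2) :
    Real.Gamma (1 / 2) * Real.Gamma (a / 2 + 1) /
      (Real.Gamma (a + 1) * Real.Gamma (1 / 2 - a / 2)) =
    2 ^ (-a) * Real.cos (π * a / 2) :=
  kummer_special_general a ha0
end

section
/- For all complex numbers a and c, ((1+i)^(2c-2a-1))/(i^(2c-1)) + ((1-i)^(2c-2a-1))/((-i)^(2c-1)) = 2^(c-a+1/2) · cos((2c+2a-1)π/4), where complex powers are taken with the principal branch. -/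
/-!
With principal logarithms, `log (1 ± i) = ½ log 2 ± iπ/4` and `log (± i) = ± iπ/2`, so the two
quotients are `exp (x ∓ i y)` with `x = (c - a - ½) log 2` and `y = (2c + 2a - 1) π / 4`; their sum is
`2 eˣ cos y`, and `2 eˣ = 2 ^ (c - a + ½)`.
-/

open Complex Real ComplexConjugate

namespace Complex

theorem one_add_I_eq_exp : 1 + I = exp (log 2 / 2 + π / 4 * I) := by
  have hexp : Real.exp (Real.log 2 / 2) = √2 := by
    rw [Real.exp_half, Real.exp_log two_pos]
  have hcos : cos (π / 4) = (√2 / 2 : ℝ) := by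
    rw [← Real.cos_pi_div_four]; push_cast; rfl
  have hsin : sin (π / 4) = (√2 / 2 : ℝ) := by
    rw [← Real.sin_pi_div_four]; push_cast; rfl
  rw [exp_add, exp_mul_I, hcos, hsin, ← ofReal_ofNat, ← ofReal_log zero_le_two, ← ofReal_div,
    ← ofReal_exp, hexp]
  apply Complex.ext <;> simp <;> field_simp <;> norm_num

theorem log_one_add_I : log (1 + I) = log 2 / 2 + π / 4 * I := by
  rw [one_add_I_eq_exp, log_exp] <;> simp [log_im] <;> linarith [pi_pos]

theorem log_one_sub_I : log (1 - I) = log 2 / 2 - π / 4 * I := by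
  have harg : arg (1 + I) ≠ π := by
    rw [Ne, arg_eq_pi_iff]; simp
  have hlog2 : conj (log 2) = log 2 := by
    rw [← ofReal_ofNat, ← ofReal_log zero_le_two, conj_ofReal]
  rw [show 1 - I = conj (1 + I) by simp [sub_eq_add_neg], log_conj _ harg, log_one_add_I]
  simp [hlog2, map_ofNat, sub_eq_add_neg]

theorem exp_sub_mul_I_add_exp_add_mul_I (x y : ℂ) :
    exp (x - y * I) + exp (x + y * I) = 2 * exp x * cos y := by
  rw [cos, sub_eq_add_neg, exp_add, exp_add, ← neg_mul]
  ring

end Complex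

theorem eval_at_neg_one (a c : ℂ) :
    (1 + Complex.I) ^ (2 * c - 2 * a - 1) / Complex.I ^ (2 * c - 1) +
      (1 - Complex.I) ^ (2 * c - 2 * a - 1) / (-Complex.I) ^ (2 * c - 1) =
    (2 : ℂ) ^ (c - a + 1 / 2) * Complex.cos ((2 * c + 2 * a - 1) * (π : ℂ) / 4) := by
  set x := Complex.log 2 * (c - a - 1 / 2)
  set y := (2 * c + 2 * a - 1) * (π : ℂ) / 4
  have h₁ : (1 + I) ^ (2 * c - 2 * a - 1) / I ^ (2 * c - 1) = exp (x - y * I) := by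
    rw [cpow_def_of_ne_zero (by simp [Complex.ext_iff]), cpow_def_of_ne_zero I_ne_zero,
      log_one_add_I, log_I, ← Complex.exp_sub]
    congr 1
    ring
  have h₂ : (1 - I) ^ (2 * c - 2 * a - 1) / (-I) ^ (2 * c - 1) = exp (x + y * I) := by
    rw [cpow_def_of_ne_zero (by simp [Complex.ext_iff]),
      cpow_def_of_ne_zero (neg_ne_zero.2 I_ne_zero), log_one_sub_I, log_neg_I, ← Complex.exp_sub]
    congr 1
    ring
  have h₃ : (2 : ℂ) ^ (c - a + 1 / 2) = 2 * exp x := by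
    rw [cpow_def_of_ne_zero two_ne_zero,
      show Complex.log 2 * (c - a + 1 / 2) = Complex.log 2 + x by ring, Complex.exp_add,
      Complex.exp_log two_ne_zero]
  rw [h₁, h₂, h₃, exp_sub_mul_I_add_exp_add_mul_I]
end

section
/- For every natural number n, every integer k with 0 ≤ k ≤ n, and every nonzero complex number z, (1+z)^n / z^k - (1-z)^n / ((-1)^k z^k) = 2 · ∑_{j} C(n, k+2j+1) z^{2j+1}, where the sum ranges over all integers j with 0 ≤ k+2j+1 ≤ n and C denotes the binomial coefficient (zero outside its range). -/
open Finset

theorem odd_extraction (n k : ℕ) (hk : k ≤ n) (z : ℂ) (hz : z ≠ 0) :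
    (1 + z) ^ n / z ^ k - (1 - z) ^ n / ((-1 : ℂ) ^ k * z ^ k) =
      2 * ∑ m ∈ (Finset.range (n + 1)).filter (fun m => m % 2 ≠ k % 2),
        (n.choose m : ℂ) * z ^ ((m : ℤ) - (k : ℤ)) := by
  have h1 : (1 + z) ^ n = ∑ m ∈ Finset.range (n + 1), (n.choose m : ℂ) * z ^ m := by
    rw [add_comm, add_pow]
    simp [mul_comm, mul_assoc, mul_left_comm]
  have h2 : (1 - z) ^ n = ∑ m ∈ Finset.range (n + 1), (n.choose m : ℂ) * (-1) ^ m * z ^ m := by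
    have h : (1 : ℂ) - z = (-z) + 1 := by ring
    rw [h, add_pow]
    refine Finset.sum_congr rfl fun m hm => ?_
    rw [neg_pow]
    ring
  rw [h1, h2, Finset.sum_div, Finset.sum_div, Finset.sum_filter, Finset.mul_sum,
    ← Finset.sum_sub_distrib]
  refine Finset.sum_congr rfl fun m hm => ?_
  have hzk : z ^ ((m : ℤ) - (k : ℤ)) = z ^ m / z ^ k := by
    rw [zpow_sub₀ hz, zpow_natCast, zpow_natCast]
  have hne : ((-1 : ℂ)) ^ k ≠ 0 := pow_ne_zero _ (by norm_num)
  have hzpk : z ^ k ≠ 0 := pow_ne_zero _ hz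
  by_cases h : m % 2 = k % 2
  · have he : ((-1 : ℂ)) ^ m = (-1) ^ k := by
      rw [neg_one_pow_eq_pow_mod_two, h, ← neg_one_pow_eq_pow_mod_two]
    simp only [h, ne_eq, not_true_eq_false, if_false, mul_zero, he]
    field_simp
    ring
  · have he : ((-1 : ℂ)) ^ m = -(-1) ^ k := by
      rw [neg_one_pow_eq_pow_mod_two (R := ℂ) (n := m),
        neg_one_pow_eq_pow_mod_two (R := ℂ) (n := k)]
      rcases Nat.mod_two_eq_zero_or_one m with hm2 | hm2 <;>
        rcases Nat.mod_two_eq_zero_or_one k with hk2 | hk2 <;> simp_all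
    simp only [h, ne_eq, not_false_iff, if_true, he, hzk]
    field_simp
    ring
end
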